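/- arXiv:1304.3042 — 3 statements merged into one kernel-verified Lean document; each statement's English description precedes it below -/
import Mathlib

section
/- Assume 0 ∈ I, where I ⊆ ℝ is a nontrivial real interval. A function f : Iⁿ → ℝ satisfying f(0) = 0 is a signed Choquet integral if and only if f(λx + (1−λ)x') = λ f(x) + (1−λ) f(x') for every λ ∈ [0,1], every permutation σ of X, and every x, x' ∈ Iⁿ_σ. -/
/-- `S↑_σ(i)` (0-indexed): the set `{σ(i), σ(i+1), …, σ(n-1)}`.  For `i = n` it is empty. -/
def SUp {n : ℕ} (σ : Equiv.Perm (Fin n)) (i : ℕ) : Finset (Fin n) :=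
  (Finset.univ.filter (fun j : Fin n => i ≤ (j : ℕ))).image σ

/-- `S↓_σ(i)`: the set `{σ(0), …, σ(i-1)}`.  For `i = 0` it is empty. -/
def SDown {n : ℕ} (σ : Equiv.Perm (Fin n)) (i : ℕ) : Finset (Fin n) :=
  (Finset.univ.filter (fun j : Fin n => (j : ℕ) < i)).image σ

/-- Two tuples are comonotonic if some permutation sorts both nondecreasingly. -/
def Comonotone {n : ℕ} (x y : Fin n → ℝ) : Prop :=
  ∃ σ : Equiv.Perm (Fin n), Monotone (x ∘ σ) ∧ Monotone (y ∘ σ)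

/-- The tuple `r·1_S`. -/
def indTuple {n : ℕ} (S : Finset (Fin n)) (r : ℝ) : Fin n → ℝ :=
  fun j => if j ∈ S then r else 0

/-- The signed Choquet integral of `x` w.r.t. `v`, computed via a sorting permutation. -/
noncomputable def Cv {n : ℕ} (v : Finset (Fin n) → ℝ) (x : Fin n → ℝ) : ℝ :=
  ∑ i : Fin n,
    x (Tuple.sort x i) *
      (v (SUp (Tuple.sort x) (i : ℕ)) - v (SUp (Tuple.sort x) ((i : ℕ) + 1)))

/-- `f` is the restriction to `Iⁿ` of a signed Choquet integral. -/
def IsSignedChoquetOn {n : ℕ} (I : Set ℝ) (f : (Fin n → ℝ) → ℝ) : Prop :=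
  ∃ v : Finset (Fin n) → ℝ, v ∅ = 0 ∧
    ∀ σ : Equiv.Perm (Fin n), ∀ x : Fin n → ℝ, (∀ i, x i ∈ I) → Monotone (x ∘ σ) →
      f x = ∑ i : Fin n, x (σ i) * (v (SUp σ (i : ℕ)) - v (SUp σ ((i : ℕ) + 1)))

/-- `f` is the restriction to `Iⁿ` of a symmetric signed Choquet integral
`Č_v(x) = C_v(x⁺) - C_v(x⁻)`. -/
def IsSymSignedChoquetOn {n : ℕ} (I : Set ℝ) (f : (Fin n → ℝ) → ℝ) : Prop :=
  ∃ v : Finset (Fin n) → ℝ, v ∅ = 0 ∧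
    ∀ x : Fin n → ℝ, (∀ i, x i ∈ I) →
      f x = Cv v (fun i => max (x i) 0) - Cv v (fun i => max (-x i) 0)

/-- Comonotonic modularity (on tuples with entries in `D`). -/
def ComonModularOn {n : ℕ} (D : Set ℝ) (f : (Fin n → ℝ) → ℝ) : Prop :=
  ∀ x y : Fin n → ℝ, (∀ i, x i ∈ D) → (∀ i, y i ∈ D) → Comonotone x y →
    f x + f y = f (fun i => min (x i) (y i)) + f (fun i => max (x i) (y i))

/-- Comonotonic additivity (on tuples with entries in `D`). -/
def ComonAdditiveOn {n : ℕ} (D : Set ℝ) (f : (Fin n → ℝ) → ℝ) : Prop :=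
  ∀ x y : Fin n → ℝ, (∀ i, x i ∈ D) → (∀ i, y i ∈ D) → Comonotone x y →
    (∀ i, x i + y i ∈ D) → f (fun i => x i + y i) = f x + f y

/-- Comonotonic maxitivity. -/
def ComonMaxitiveOn {n : ℕ} (D : Set ℝ) (f : (Fin n → ℝ) → ℝ) : Prop :=
  ∀ x y : Fin n → ℝ, (∀ i, x i ∈ D) → (∀ i, y i ∈ D) → Comonotone x y →
    f (fun i => max (x i) (y i)) = max (f x) (f y)

/-- Comonotonic minitivity. -/
def ComonMinitiveOn {n : ℕ} (D : Set ℝ) (f : (Fin n → ℝ) → ℝ) : Prop :=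
  ∀ x y : Fin n → ℝ, (∀ i, x i ∈ D) → (∀ i, y i ∈ D) → Comonotone x y →
    f (fun i => min (x i) (y i)) = min (f x) (f y)

/-- Horizontal min-additivity. -/
def HorizMinAdditiveOn {n : ℕ} (D : Set ℝ) (f : (Fin n → ℝ) → ℝ) : Prop :=
  ∀ x : Fin n → ℝ, (∀ i, x i ∈ D) → ∀ c ∈ D, (∀ i, x i - min (x i) c ∈ D) →
    f x = f (fun i => min (x i) c) + f (fun i => x i - min (x i) c)

/-- Horizontal max-additivity. -/
def HorizMaxAdditiveOn {n : ℕ} (D : Set ℝ) (f : (Fin n → ℝ) → ℝ) : Prop :=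
  ∀ x : Fin n → ℝ, (∀ i, x i ∈ D) → ∀ c ∈ D, (∀ i, x i - max (x i) c ∈ D) →
    f x = f (fun i => max (x i) c) + f (fun i => x i - max (x i) c)

/-- Horizontal median-additivity (for `I` centered at `0`). -/
def HorizMedAdditiveOn {n : ℕ} (I : Set ℝ) (f : (Fin n → ℝ) → ℝ) : Prop :=
  ∀ x : Fin n → ℝ, (∀ i, x i ∈ I) → ∀ c ∈ I, 0 ≤ c →
    f x = f (fun i => max (-c) (min (x i) c)) + f (fun i => x i - min (x i) c)
        + f (fun i => x i - max (x i) (-c))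

/-- Invariance under horizontal min-differences (for domains of nonnegative tuples). -/
def InvHMinDiffOn {n : ℕ} (D : Set ℝ) (f : (Fin n → ℝ) → ℝ) : Prop :=
  ∀ x : Fin n → ℝ, (∀ i, x i ∈ D) → ∀ c ∈ D,
    f x - f (fun i => min (x i) c) =
      f (fun i => if x i ≤ c then 0 else x i) -
        f (fun i => min (if x i ≤ c then 0 else x i) c)

/-- Invariance under horizontal max-differences (for domains of nonpositive tuples). -/
def InvHMaxDiffOn {n : ℕ} (D : Set ℝ) (f : (Fin n → ℝ) → ℝ) : Prop :=
  ∀ x : Fin n → ℝ, (∀ i, x i ∈ D) → ∀ c ∈ D,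
    f x - f (fun i => max (x i) c) =
      f (fun i => if c ≤ x i then 0 else x i) -
        f (fun i => max (if c ≤ x i then 0 else x i) c)

/-- `⋀_{i ∈ S} x i`, with the convention that the empty infimum is `b`. -/
noncomputable def infWith {n : ℕ} (b : ℝ) (S : Finset (Fin n)) (x : Fin n → ℝ) : ℝ :=
  if h : S.Nonempty then S.inf' h x else b

/-- An `[a,b]`-valued capacity. -/
def IsCapacityOn {n : ℕ} (a b : ℝ) (μ : Finset (Fin n) → ℝ) : Prop :=
  μ ∅ = a ∧ μ Finset.univ = b ∧ ∀ S T : Finset (Fin n), S ⊆ T → μ S ≤ μ T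

/-- `f` is nondecreasing (in each argument) on tuples with entries in `D`. -/
def NondecreasingOn {n : ℕ} (D : Set ℝ) (f : (Fin n → ℝ) → ℝ) : Prop :=
  ∀ x y : Fin n → ℝ, (∀ i, x i ∈ D) → (∀ i, y i ∈ D) → (∀ i, x i ≤ y i) → f x ≤ f y

/-!
On a cone `Iⁿ_σ`, which contains `0`, affinity along segments together with `f 0 = 0` makes `f`
homogeneous under shrinking and additive on comonotone pairs. Along a ray `c • 1_S` homogeneity
leaves one slope for `c > 0` and one for `c < 0`; the positive slopes (or, when `I ⊆ (-∞, 0]`,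
differences of negative ones) define `v`, and additivity on `d • 1_X + (-d) • 1_Sᶜ = d • 1_S`
ties the negative slopes to `v`. Finally `x ∈ Iⁿ_σ` is the sum of the horizontal layers
`c • 1_{S↑_σ(k)}` of `max x 0` and `d • 1_{S↓_σ(k)}` of `min x 0`; all partial sums stay in
`Iⁿ_σ`, so `f` and the linear formula for `C_v` are both additive along this decomposition and
agree on each layer.
-/

open Finset

section

variable {n : ℕ}

theorem mem_SUp {σ : Equiv.Perm (Fin n)} {k : ℕ} {j : Fin n} :
    j ∈ SUp σ k ↔ k ≤ (σ.symm j : ℕ) := by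
  simp [SUp, ← Equiv.eq_symm_apply]

theorem mem_SDown {σ : Equiv.Perm (Fin n)} {k : ℕ} {j : Fin n} :
    j ∈ SDown σ k ↔ (σ.symm j : ℕ) < k := by
  simp [SDown, ← Equiv.eq_symm_apply]

theorem SUp_zero (σ : Equiv.Perm (Fin n)) : SUp σ 0 = univ := by
  ext j; simp [mem_SUp]

theorem SUp_self (σ : Equiv.Perm (Fin n)) : SUp σ n = ∅ := by
  ext j; simp [mem_SUp]

theorem compl_SDown (σ : Equiv.Perm (Fin n)) (k : ℕ) : (SDown σ k)ᶜ = SUp σ k := by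
  ext j; simp [mem_SUp, mem_SDown]

@[simp]
theorem indTuple_zero (S : Finset (Fin n)) : indTuple S 0 = fun _ => 0 := by
  ext j; simp [indTuple]

@[simp]
theorem indTuple_empty (r : ℝ) : indTuple (∅ : Finset (Fin n)) r = fun _ => 0 := by
  ext j; simp [indTuple]

@[simp]
theorem indTuple_univ (r : ℝ) : indTuple (univ : Finset (Fin n)) r = fun _ => r := by
  ext j; simp [indTuple]

theorem indTuple_mul (S : Finset (Fin n)) (t c : ℝ) :
    indTuple S (t * c) = fun j => t * indTuple S c j := by
  ext j; simp [indTuple]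

theorem indTuple_mem {I : Set ℝ} (h0I : (0 : ℝ) ∈ I) (S : Finset (Fin n)) {c : ℝ}
    (hc : c ∈ I) (j : Fin n) : indTuple S c j ∈ I := by
  unfold indTuple; split_ifs <;> assumption

theorem comonotone_const (c : ℝ) (y : Fin n → ℝ) : Comonotone (fun _ => c) y :=
  ⟨Tuple.sort y, monotone_const, Tuple.monotone_sort y⟩

theorem monotone_indTuple_SUp {σ : Equiv.Perm (Fin n)} (k : ℕ) {c : ℝ} (hc : 0 ≤ c) :
    Monotone (indTuple (SUp σ k) c ∘ σ) := by
  intro i i' hii'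
  have : (i : ℕ) ≤ i' := hii'
  simp only [Function.comp_apply, indTuple, mem_SUp, Equiv.symm_apply_apply]
  split_ifs <;> first | rfl | assumption | omega

theorem monotone_indTuple_SDown {σ : Equiv.Perm (Fin n)} (k : ℕ) {d : ℝ} (hd : d ≤ 0) :
    Monotone (indTuple (SDown σ k) d ∘ σ) := by
  intro i i' hii'
  have : (i : ℕ) ≤ i' := hii'
  simp only [Function.comp_apply, indTuple, mem_SDown, Equiv.symm_apply_apply]
  split_ifs <;> first | rfl | assumption | omega

theorem indTuple_nonneg (S : Finset (Fin n)) {c : ℝ} (hc : 0 ≤ c) : 0 ≤ indTuple S c := by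
  intro j; unfold indTuple; split_ifs <;> simp [hc]

theorem indTuple_nonpos (S : Finset (Fin n)) {d : ℝ} (hd : d ≤ 0) : indTuple S d ≤ 0 := by
  intro j; unfold indTuple; split_ifs <;> simp [hd]

theorem mul_eq_mul_of_shrink_homogeneous {J : Set ℝ} {φ : ℝ → ℝ}
    (hφ : ∀ c ∈ J, ∀ t ∈ Set.Icc (0 : ℝ) 1, φ (t * c) = t * φ c) {c c' : ℝ} (hc : c ∈ J)
    (hc' : c' ∈ J) (hcc' : 0 ≤ c * c') : φ c * c' = φ c' * c := by
  wlog hle : |c| ≤ |c'| generalizing c c'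
  · exact (this hc' hc (by linarith [mul_comm c c']) (le_of_not_ge hle)).symm
  rcases eq_or_ne c' 0 with rfl | hc'0
  · rw [abs_zero, abs_nonpos_iff] at hle
    rw [hle]
  have ht : c / c' ∈ Set.Icc (0 : ℝ) 1 :=
    ⟨by rw [← mul_div_mul_right c c' hc'0]; exact div_nonneg hcc' (mul_self_nonneg c'),
      (le_abs_self _).trans (by rw [abs_div]; exact div_le_one_of_le₀ hle (abs_nonneg _))⟩
  rw [← div_mul_cancel₀ c hc'0, hφ c' hc' _ ht]
  ring

/-- `c * v S` and `d * (v X - v Sᶜ)` are the values of `C_v` at `c • 1_S` for `c ≥ 0` and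
`d ≤ 0`. -/
def AgreesOnIndicators (I : Set ℝ) (f : (Fin n → ℝ) → ℝ) (v : Finset (Fin n) → ℝ) : Prop :=
  v ∅ = 0 ∧ (∀ S, ∀ c ∈ I, 0 ≤ c → f (indTuple S c) = c * v S) ∧
    ∀ S, ∀ d ∈ I, d ≤ 0 → f (indTuple S d) = d * (v univ - v Sᶜ)

def ConeAffineOn (I : Set ℝ) (f : (Fin n → ℝ) → ℝ) : Prop :=
  ∀ lam : ℝ, lam ∈ Set.Icc (0 : ℝ) 1 →
    ∀ σ : Equiv.Perm (Fin n), ∀ x x' : Fin n → ℝ,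
      (∀ i, x i ∈ I) → (∀ i, x' i ∈ I) →
      Monotone (x ∘ σ) → Monotone (x' ∘ σ) →
      f (fun i => lam * x i + (1 - lam) * x' i) = lam * f x + (1 - lam) * f x'

namespace ConeAffineOn

variable {I : Set ℝ} {f : (Fin n → ℝ) → ℝ}

theorem homogeneous (H : ConeAffineOn I f) (h0I : (0 : ℝ) ∈ I) (hf0 : f (fun _ => 0) = 0)
    {x : Fin n → ℝ} (hx : ∀ i, x i ∈ I) {t : ℝ} (ht : t ∈ Set.Icc (0 : ℝ) 1) :
    f (fun i => t * x i) = t * f x := by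
  simpa [hf0] using
    H t ht (Tuple.sort x) x (fun _ => 0) hx (fun _ => h0I) (Tuple.monotone_sort x) monotone_const

theorem comonAdditiveOn (H : ConeAffineOn I f) (h0I : (0 : ℝ) ∈ I)
    (hf0 : f (fun _ => 0) = 0) : ComonAdditiveOn I f := by
  rintro x y hx hy ⟨σ, hmx, hmy⟩ hxy
  have hmid := H (1 / 2) (by norm_num) σ x y hx hy hmx hmy
  have hhalf := H.homogeneous h0I hf0 hxy (t := 1 / 2) (by norm_num)
  have : (fun i => 1 / 2 * x i + (1 - 1 / 2) * y i) = fun i => 1 / 2 * (x i + y i) := by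
    ext i; ring
  rw [this, hhalf] at hmid
  linarith

theorem indTuple_mul_comm (H : ConeAffineOn I f) (h0I : (0 : ℝ) ∈ I)
    (hf0 : f (fun _ => 0) = 0) (S : Finset (Fin n)) {c c' : ℝ} (hc : c ∈ I) (hc' : c' ∈ I)
    (hcc' : 0 ≤ c * c') : f (indTuple S c) * c' = f (indTuple S c') * c :=
  mul_eq_mul_of_shrink_homogeneous (φ := fun c => f (indTuple S c))
    (fun _ hc _ ht => by
      simpa only [indTuple_mul] using H.homogeneous h0I hf0 (indTuple_mem h0I S hc) ht)
    hc hc' hcc'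

theorem agreesOnIndicators_of_pos (H : ConeAffineOn I f) (hI : I.OrdConnected)
    (h0I : (0 : ℝ) ∈ I) (hf0 : f (fun _ => 0) = 0) {e : ℝ} (heI : e ∈ I) (he : 0 < e) :
    AgreesOnIndicators I f (fun S => f (indTuple S e) / e) := by
  have hslope := H.indTuple_mul_comm h0I hf0
  have hadd := H.comonAdditiveOn h0I hf0
  have hpos : ∀ S, ∀ c ∈ I, 0 ≤ c → f (indTuple S c) = c * (f (indTuple S e) / e) := by
    intro S c hc hc0
    have := hslope S hc heI (mul_nonneg hc0 he.le)
    field_simp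
    linarith
  refine ⟨by simp [hf0], hpos, fun S d hd hd0 => ?_⟩
  -- Reduce to `d' = max d (-e)`, for which `-d' ∈ I` as well.
  set d' := max d (-e)
  have hd'0 : d' ≤ 0 := max_le hd0 (by linarith)
  have hd'I : d' ∈ I := hI.out hd h0I ⟨le_max_left _ _, hd'0⟩
  have hnd'I : -d' ∈ I := hI.out h0I heI ⟨by linarith, by linarith [le_max_right d (-e)]⟩
  have hconst : f (fun _ => d') = -f (fun _ => -d') := by
    have := hadd (fun _ => d') (fun _ => -d') (fun _ => hd'I) (fun _ => hnd'I)
      (comonotone_const _ _) (fun _ => by simpa using h0I)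
    simp only [add_neg_cancel, hf0] at this
    linarith
  have hS : (fun j => d' + indTuple Sᶜ (-d') j) = indTuple S d' := by
    ext j; by_cases hj : j ∈ S <;> simp [indTuple, hj]
  have hsplit : f (indTuple S d') = f (fun _ => d') + f (indTuple Sᶜ (-d')) := by
    rw [← hS]
    exact hadd _ _ (fun _ => hd'I) (indTuple_mem h0I _ hnd'I) (comonotone_const _ _)
      (fun j => by rw [congrFun hS j]; exact indTuple_mem h0I S hd'I j)
  have hd' : f (indTuple S d') = d' * (f (indTuple univ e) / e - f (indTuple Sᶜ e) / e) := by
    rw [hsplit, hconst, ← indTuple_univ, hpos _ _ hnd'I (by linarith),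
      hpos _ _ hnd'I (by linarith)]
    ring
  rcases hd0.lt_or_eq with hd0 | rfl
  · have hd'0 : d' < 0 := max_lt hd0 (by linarith)
    have := hslope S hd hd'I (mul_nonneg_of_nonpos_of_nonpos hd0.le hd'0.le)
    rw [hd'] at this
    exact mul_right_cancel₀ hd'0.ne (by linarith)
  · simp [hf0]

theorem agreesOnIndicators_of_nonpos (H : ConeAffineOn I f) (h0I : (0 : ℝ) ∈ I)
    (hf0 : f (fun _ => 0) = 0) (hI0 : ∀ c ∈ I, c ≤ 0) {a : ℝ} (haI : a ∈ I) (ha : a < 0) :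
    AgreesOnIndicators I f (fun S => (f (indTuple univ a) - f (indTuple Sᶜ a)) / a) := by
  refine ⟨by simp, fun S c hc hc0 => ?_, fun S d hd hd0 => ?_⟩
  · simp [le_antisymm (hI0 c hc) hc0, hf0]
  · have := H.indTuple_mul_comm h0I hf0 S hd haI (mul_nonneg_of_nonpos_of_nonpos hd0 ha.le)
    simp only [compl_univ, compl_compl, indTuple_empty, hf0]
    rw [show d * ((f (indTuple univ a) - 0) / a - (f (indTuple univ a) - f (indTuple S a)) / a)
      = d * f (indTuple S a) / a by ring, eq_div_iff ha.ne]
    linarith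

theorem exists_agreesOnIndicators (H : ConeAffineOn I f) (hI : I.OrdConnected)
    (hInt : ∃ a b : ℝ, a ∈ I ∧ b ∈ I ∧ a < b) (h0I : (0 : ℝ) ∈ I)
    (hf0 : f (fun _ => 0) = 0) : ∃ v, AgreesOnIndicators I f v := by
  by_cases hpos : ∃ e ∈ I, 0 < e
  · obtain ⟨e, heI, he⟩ := hpos
    exact ⟨_, H.agreesOnIndicators_of_pos hI h0I hf0 heI he⟩
  · push Not at hpos
    obtain ⟨a, b, haI, hbI, hab⟩ := hInt
    exact ⟨_, H.agreesOnIndicators_of_nonpos h0I hf0 hpos haI (hab.trans_le (hpos b hbI))⟩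

end ConeAffineOn

theorem sum_apply_mem_of_subset {I : Set ℝ} (hI : I.OrdConnected) (h0I : (0 : ℝ) ∈ I)
    {ι : Type*} {g : ι → Fin n → ℝ} {s t : Finset ι} (hts : t ⊆ s)
    (hsign : (∀ k ∈ s, 0 ≤ g k) ∨ ∀ k ∈ s, g k ≤ 0) (hs : ∀ j, (∑ k ∈ s, g k) j ∈ I)
    (j : Fin n) : (∑ k ∈ t, g k) j ∈ I := by
  rcases hsign with hg | hg
  · exact hI.out h0I (hs j) ⟨sum_nonneg (fun k hk => hg k (hts hk)) j,
      sum_le_sum_of_subset_of_nonneg hts (fun k hk _ => hg k hk) j⟩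
  · exact hI.out (hs j) h0I ⟨sum_le_sum_of_subset_of_nonpos' hts (fun k hk _ => hg k hk) j,
      sum_nonpos (fun k hk => hg k (hts hk)) j⟩

theorem monotone_sum_comp {ι : Type*} {g : ι → Fin n → ℝ} {s : Finset ι}
    {σ : Equiv.Perm (Fin n)} (hg : ∀ k ∈ s, Monotone (g k ∘ σ)) :
    Monotone ((∑ k ∈ s, g k) ∘ σ) := by
  intro i i' hii'
  simp only [Function.comp_apply, Finset.sum_apply]
  exact sum_le_sum fun k hk => hg k hk hii'

theorem ComonAdditiveOn.map_sum {I : Set ℝ} {F : (Fin n → ℝ) → ℝ} (hF : ComonAdditiveOn I F)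
    (hI : I.OrdConnected) (h0I : (0 : ℝ) ∈ I) (hF0 : F 0 = 0) {ι : Type*} {g : ι → Fin n → ℝ}
    {s : Finset ι} {σ : Equiv.Perm (Fin n)}
    (hg : ∀ k ∈ s, Monotone (g k ∘ σ)) (hsign : (∀ k ∈ s, 0 ≤ g k) ∨ ∀ k ∈ s, g k ≤ 0)
    (hs : ∀ j, (∑ k ∈ s, g k) j ∈ I) : F (∑ k ∈ s, g k) = ∑ k ∈ s, F (g k) := by
  classical
  induction s using Finset.induction_on with
  | empty => simpa using hF0
  | insert a s has ih =>
    have hsub : s ⊆ insert a s := subset_insert a s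
    have hsign' : (∀ k ∈ s, 0 ≤ g k) ∨ ∀ k ∈ s, g k ≤ 0 :=
      hsign.imp (fun h k hk => h k (hsub hk)) (fun h k hk => h k (hsub hk))
    have hs' := sum_apply_mem_of_subset hI h0I hsub hsign hs
    have ha := sum_apply_mem_of_subset hI h0I (singleton_subset_iff.2 (mem_insert_self a s))
      hsign hs
    simp only [sum_singleton] at ha
    rw [sum_insert has, sum_insert has, ← ih (fun k hk => hg k (hsub hk)) hsign' hs']
    exact hF _ _ ha hs'
      ⟨σ, hg a (mem_insert_self a s), monotone_sum_comp fun k hk => hg k (hsub hk)⟩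
      (fun j => by simpa [sum_insert has] using hs j)

/-- `sortedLevel σ x (k + 1) = x (σ k)`, padded with `0` at both ends. -/
def sortedLevel (σ : Equiv.Perm (Fin n)) (x : Fin n → ℝ) : ℕ → ℝ
  | 0 => 0
  | k + 1 => if h : k < n then x (σ ⟨k, h⟩) else 0

def upHeight (σ : Equiv.Perm (Fin n)) (x : Fin n → ℝ) (k : ℕ) : ℝ :=
  max (sortedLevel σ x (k + 1)) 0 - max (sortedLevel σ x k) 0

def downHeight (σ : Equiv.Perm (Fin n)) (x : Fin n → ℝ) (k : ℕ) : ℝ :=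
  min (sortedLevel σ x (k + 1)) 0 - min (sortedLevel σ x (k + 2)) 0

section Layers

variable {σ : Equiv.Perm (Fin n)} {x : Fin n → ℝ}

theorem sortedLevel_symm_apply (j : Fin n) : sortedLevel σ x ((σ.symm j : ℕ) + 1) = x j := by
  simp [sortedLevel]

theorem sortedLevel_succ_self : sortedLevel σ x (n + 1) = 0 := by
  simp [sortedLevel]

theorem sortedLevel_mem {I : Set ℝ} (h0I : (0 : ℝ) ∈ I) (hx : ∀ i, x i ∈ I) (k : ℕ) :
    sortedLevel σ x k ∈ I := by
  cases k with
  | zero => exact h0I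
  | succ k => simp only [sortedLevel]; split_ifs <;> simp [hx, h0I]

theorem sortedLevel_le_succ (hmx : Monotone (x ∘ σ)) {k : ℕ} (hk : k + 1 < n) :
    sortedLevel σ x (k + 1) ≤ sortedLevel σ x (k + 2) := by
  simp only [sortedLevel, dif_pos hk, dif_pos (Nat.lt_of_succ_lt hk)]
  exact hmx (Fin.mk_le_mk.2 k.le_succ)

theorem upHeight_nonneg (hmx : Monotone (x ∘ σ)) {k : ℕ} (hk : k < n) :
    0 ≤ upHeight σ x k := by
  rw [upHeight, sub_nonneg]
  cases k with
  | zero => simp [sortedLevel]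
  | succ k => exact max_le_max_right 0 (sortedLevel_le_succ hmx hk)

theorem downHeight_nonpos (hmx : Monotone (x ∘ σ)) {k : ℕ} (hk : k < n) :
    downHeight σ x k ≤ 0 := by
  rw [downHeight, sub_nonpos]
  rcases Nat.lt_or_ge (k + 1) n with hk' | hk'
  · exact min_le_min_right 0 (sortedLevel_le_succ hmx hk')
  · rw [show k + 2 = n + 1 by omega, sortedLevel_succ_self, min_self]
    exact min_le_right _ _

theorem upHeight_mem {I : Set ℝ} (hI : I.OrdConnected) (h0I : (0 : ℝ) ∈ I)
    (hx : ∀ i, x i ∈ I) (hmx : Monotone (x ∘ σ)) {k : ℕ} (hk : k < n) : upHeight σ x k ∈ I := by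
  have htop : max (sortedLevel σ x (k + 1)) 0 ∈ I := by
    rcases max_choice (sortedLevel σ x (k + 1)) 0 with h | h <;> rw [h]
    exacts [sortedLevel_mem h0I hx _, h0I]
  exact hI.out h0I htop ⟨upHeight_nonneg hmx hk, sub_le_self _ (le_max_right _ _)⟩

theorem downHeight_mem {I : Set ℝ} (hI : I.OrdConnected) (h0I : (0 : ℝ) ∈ I)
    (hx : ∀ i, x i ∈ I) (hmx : Monotone (x ∘ σ)) {k : ℕ} (hk : k < n) :
    downHeight σ x k ∈ I := by
  have hbot : min (sortedLevel σ x (k + 1)) 0 ∈ I := by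
    rcases min_choice (sortedLevel σ x (k + 1)) 0 with h | h <;> rw [h]
    exacts [sortedLevel_mem h0I hx _, h0I]
  exact hI.out hbot h0I ⟨(le_sub_self_iff _).2 (min_le_right _ _), downHeight_nonpos hmx hk⟩

theorem sum_indTuple_upHeight :
    ∑ k ∈ range n, indTuple (SUp σ k) (upHeight σ x k) = fun j => max (x j) 0 := by
  ext j
  have hfilter : (range n).filter (· ≤ (σ.symm j : ℕ)) = range ((σ.symm j : ℕ) + 1) := by
    ext k; simp only [mem_filter, mem_range]; omega
  simp only [Finset.sum_apply, indTuple, mem_SUp]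
  rw [← sum_filter, hfilter]
  simp only [upHeight]
  rw [sum_range_sub (fun k => max (sortedLevel σ x k) 0), sortedLevel_symm_apply]
  simp [sortedLevel]

theorem sum_indTuple_downHeight :
    ∑ k ∈ range n, indTuple (SDown σ (k + 1)) (downHeight σ x k) = fun j => min (x j) 0 := by
  ext j
  have hfilter :
      (range n).filter (fun k => (σ.symm j : ℕ) < k + 1) = Ico (σ.symm j : ℕ) n := by
    ext k; simp only [mem_filter, mem_range, mem_Ico]; omega
  simp only [Finset.sum_apply, indTuple, mem_SDown]
  rw [← sum_filter, hfilter, sum_Ico_eq_sub _ (σ.symm j).isLt.le]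
  simp only [downHeight]
  rw [sum_range_sub' (fun k => min (sortedLevel σ x (k + 1)) 0),
    sum_range_sub' (fun k => min (sortedLevel σ x (k + 1)) 0), sortedLevel_symm_apply,
    sortedLevel_succ_self]
  simp

end Layers

theorem ComonAdditiveOn.eq_sum_layers {I : Set ℝ} {F : (Fin n → ℝ) → ℝ}
    (hF : ComonAdditiveOn I F) (hI : I.OrdConnected) (h0I : (0 : ℝ) ∈ I) (hF0 : F 0 = 0)
    {σ : Equiv.Perm (Fin n)} {x : Fin n → ℝ} (hx : ∀ i, x i ∈ I) (hmx : Monotone (x ∘ σ)) :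
    F x = ∑ k ∈ range n, F (indTuple (SUp σ k) (upHeight σ x k)) +
      ∑ k ∈ range n, F (indTuple (SDown σ (k + 1)) (downHeight σ x k)) := by
  have hpos : ∀ i, max (x i) 0 ∈ I := fun i => by
    rcases max_choice (x i) 0 with h | h <;> rw [h]; exacts [hx i, h0I]
  have hneg : ∀ i, min (x i) 0 ∈ I := fun i => by
    rcases min_choice (x i) 0 with h | h <;> rw [h]; exacts [hx i, h0I]
  have hx' : x = fun i => min (x i) 0 + max (x i) 0 := by ext i; rw [min_add_max, add_zero]
  have hsplit : F x = F (fun i => min (x i) 0) + F (fun i => max (x i) 0) := by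
    conv_lhs => rw [hx']
    exact hF _ _ hneg hpos ⟨σ, hmx.min monotone_const, hmx.max monotone_const⟩
      (fun i => by rw [min_add_max, add_zero]; exact hx i)
  rw [hsplit, add_comm, ← sum_indTuple_upHeight (σ := σ), ← sum_indTuple_downHeight (σ := σ)]
  congr 1
  · refine hF.map_sum hI h0I hF0
      (fun k hk => monotone_indTuple_SUp k (upHeight_nonneg hmx (mem_range.1 hk)))
      (Or.inl fun k hk => indTuple_nonneg _ (upHeight_nonneg hmx (mem_range.1 hk))) ?_
    rw [sum_indTuple_upHeight]; exact hpos
  · refine hF.map_sum hI h0I hF0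
      (fun k hk => monotone_indTuple_SDown _ (downHeight_nonpos hmx (mem_range.1 hk)))
      (Or.inr fun k hk => indTuple_nonpos _ (downHeight_nonpos hmx (mem_range.1 hk))) ?_
    rw [sum_indTuple_downHeight]; exact hneg

/-- The formula for `C_v` on `ℝⁿ_σ`, as a function on all of `ℝⁿ`. -/
def choquetSum (σ : Equiv.Perm (Fin n)) (v : Finset (Fin n) → ℝ) (x : Fin n → ℝ) : ℝ :=
  ∑ i : Fin n, x (σ i) * (v (SUp σ (i : ℕ)) - v (SUp σ ((i : ℕ) + 1)))

section ChoquetSum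

variable (σ : Equiv.Perm (Fin n)) (v : Finset (Fin n) → ℝ)

theorem choquetSum_add (x y : Fin n → ℝ) :
    choquetSum σ v (fun i => x i + y i) = choquetSum σ v x + choquetSum σ v y := by
  simp only [choquetSum, add_mul, sum_add_distrib]

theorem choquetSum_const_mul (t : ℝ) (x : Fin n → ℝ) :
    choquetSum σ v (fun i => t * x i) = t * choquetSum σ v x := by
  simp only [choquetSum, mul_sum, mul_assoc]

theorem choquetSum_zero : choquetSum σ v 0 = 0 := by
  simp [choquetSum]

theorem choquetSum_indTuple_SUp (hv : v ∅ = 0) {k : ℕ} (hk : k ≤ n) (c : ℝ) :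
    choquetSum σ v (indTuple (SUp σ k) c) = c * v (SUp σ k) := by
  have hfilter : (range n).filter (k ≤ ·) = Ico k n := by
    ext i; simp only [mem_filter, mem_range, mem_Ico]; omega
  simp only [choquetSum, indTuple, mem_SUp, Equiv.symm_apply_apply, ite_mul, zero_mul]
  rw [Fin.sum_univ_eq_sum_range
      (fun i => if k ≤ i then c * (v (SUp σ i) - v (SUp σ (i + 1))) else 0),
    ← sum_filter, hfilter, sum_Ico_eq_sub _ hk, ← mul_sum, ← mul_sum,
    sum_range_sub' (fun i => v (SUp σ i)), sum_range_sub' (fun i => v (SUp σ i)), SUp_self, hv]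
  ring

theorem choquetSum_indTuple_SDown {k : ℕ} (hk : k ≤ n) (d : ℝ) :
    choquetSum σ v (indTuple (SDown σ k) d) = d * (v univ - v (SUp σ k)) := by
  have hfilter : (range n).filter (· < k) = range k := by
    ext i; simp only [mem_filter, mem_range]; omega
  simp only [choquetSum, indTuple, mem_SDown, Equiv.symm_apply_apply, ite_mul, zero_mul]
  rw [Fin.sum_univ_eq_sum_range
      (fun i => if i < k then d * (v (SUp σ i) - v (SUp σ (i + 1))) else 0),
    ← sum_filter, hfilter, ← mul_sum, sum_range_sub' (fun i => v (SUp σ i)), SUp_zero]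

end ChoquetSum

theorem AgreesOnIndicators.eq_choquetSum {I : Set ℝ} {f : (Fin n → ℝ) → ℝ}
    {v : Finset (Fin n) → ℝ} (hv : AgreesOnIndicators I f v) (hf : ComonAdditiveOn I f)
    (hI : I.OrdConnected) (h0I : (0 : ℝ) ∈ I) (hf0 : f (fun _ => 0) = 0)
    {σ : Equiv.Perm (Fin n)} {x : Fin n → ℝ} (hx : ∀ i, x i ∈ I) (hmx : Monotone (x ∘ σ)) :
    f x = choquetSum σ v x := by
  obtain ⟨hv0, hup, hdown⟩ := hv
  have hT : ComonAdditiveOn I (choquetSum σ v) := fun y z _ _ _ _ => choquetSum_add σ v y z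
  rw [hf.eq_sum_layers hI h0I hf0 hx hmx, hT.eq_sum_layers hI h0I (choquetSum_zero σ v) hx hmx]
  congr 1 <;> refine sum_congr rfl fun k hk => ?_ <;> rw [mem_range] at hk
  · rw [hup _ _ (upHeight_mem hI h0I hx hmx hk) (upHeight_nonneg hmx hk),
      choquetSum_indTuple_SUp σ v hv0 hk.le]
  · rw [hdown _ _ (downHeight_mem hI h0I hx hmx hk) (downHeight_nonpos hmx hk), compl_SDown,
      choquetSum_indTuple_SDown σ v hk]

theorem isSignedChoquetOn_iff {I : Set ℝ} {f : (Fin n → ℝ) → ℝ} :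
    IsSignedChoquetOn I f ↔ ∃ v : Finset (Fin n) → ℝ, v ∅ = 0 ∧
      ∀ σ : Equiv.Perm (Fin n), ∀ x : Fin n → ℝ, (∀ i, x i ∈ I) → Monotone (x ∘ σ) →
        f x = choquetSum σ v x :=
  Iff.rfl

theorem IsSignedChoquetOn.coneAffineOn {I : Set ℝ} {f : (Fin n → ℝ) → ℝ}
    (hI : I.OrdConnected) (hf : IsSignedChoquetOn I f) : ConeAffineOn I f := by
  obtain ⟨v, -, hv⟩ := isSignedChoquetOn_iff.1 hf
  intro lam ⟨hl0, hl1⟩ σ x x' hx hx' hmx hmx'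
  have hl1' : 0 ≤ 1 - lam := sub_nonneg.2 hl1
  have hmem : ∀ i, lam * x i + (1 - lam) * x' i ∈ I := fun i =>
    hI.convex (hx i) (hx' i) hl0 hl1' (add_sub_cancel lam 1)
  have hmono : Monotone ((fun i => lam * x i + (1 - lam) * x' i) ∘ σ) :=
    (hmx.const_mul hl0).add (hmx'.const_mul hl1')
  rw [hv σ _ hmem hmono, hv σ x hx hmx, hv σ x' hx' hmx', choquetSum_add, choquetSum_const_mul,
    choquetSum_const_mul]

end

theorem statement0_general (n : ℕ) (I : Set ℝ) (hI : I.OrdConnected)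
    (hInt : ∃ a b : ℝ, a ∈ I ∧ b ∈ I ∧ a < b) (h0I : (0 : ℝ) ∈ I)
    (f : (Fin n → ℝ) → ℝ) (hf0 : f (fun _ => 0) = 0) :
    IsSignedChoquetOn I f ↔
      ∀ lam : ℝ, lam ∈ Set.Icc (0 : ℝ) 1 →
        ∀ σ : Equiv.Perm (Fin n), ∀ x x' : Fin n → ℝ,
          (∀ i, x i ∈ I) → (∀ i, x' i ∈ I) →
          Monotone (x ∘ σ) → Monotone (x' ∘ σ) →
          f (fun i => lam * x i + (1 - lam) * x' i) = lam * f x + (1 - lam) * f x' := by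
  refine ⟨IsSignedChoquetOn.coneAffineOn hI, fun H => ?_⟩
  obtain ⟨v, hv⟩ := ConeAffineOn.exists_agreesOnIndicators H hI hInt h0I hf0
  exact isSignedChoquetOn_iff.2 ⟨v, hv.1, fun σ x hx hmx =>
    hv.eq_choquetSum (ConeAffineOn.comonAdditiveOn H h0I hf0) hI h0I hf0 hx hmx⟩

theorem statement0 (n : ℕ) (hn : 0 < n) (I : Set ℝ) (hI : I.OrdConnected)
    (hInt : ∃ a b : ℝ, a ∈ I ∧ b ∈ I ∧ a < b) (h0I : (0 : ℝ) ∈ I)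
    (f : (Fin n → ℝ) → ℝ) (hf0 : f (fun _ => 0) = 0) :
    IsSignedChoquetOn I f ↔
      ∀ lam : ℝ, lam ∈ Set.Icc (0 : ℝ) 1 →
        ∀ σ : Equiv.Perm (Fin n), ∀ x x' : Fin n → ℝ,
          (∀ i, x i ∈ I) → (∀ i, x' i ∈ I) →
          Monotone (x ∘ σ) → Monotone (x' ∘ σ) →
          f (fun i => lam * x i + (1 - lam) * x' i) = lam * f x + (1 - lam) * f x' :=
  statement0_general n I hI hInt h0I f hf0
end

section
/- Assume I is a real interval centered at 0. A function f : Iⁿ → ℝ is horizontally median-additive if and only if its restrictions to I₊ⁿ and to I₋ⁿ are comonotonically additive and f(x) = f(x⁺) + f(−x⁻) for every x ∈ Iⁿ. -/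
/-!
On nonnegative tuples, median-additivity at level `c` is horizontal min-additivity
`f x = f (x ∧ c) + f (x - x ∧ c)`. For a comonotonic pair `x, y ≥ 0`, take a coordinate where
`x + y` is smallest among its nonzero values, with values `a, b`. Comonotonicity forces `x ≥ a`
and `y ≥ b` on the support `S` of `x + y`, so cutting `x`, `y`, `x + y` at `a`, `b`, `a + b` peels
off the layers `a • 1_S`, `b • 1_S`, `(a + b) • 1_S`, on which `f` is additive, and leaves a
comonotonic pair with smaller support. Induction on the support gives comonotonic additivity on
`I₊ⁿ`; reflecting `x ↦ -x` gives it on `I₋ⁿ`, and `f x = f x⁺ + f (-x⁻)` is the case `c = 0`.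

Conversely, cutting `x⁺` at `c` and `-x⁻` at `-c` splits each into two monotone functions of `x`,
hence into a comonotonic pair, and the four pieces reassemble into the median decomposition.
-/

open Finset Set

lemma Comonotone.refl {n : ℕ} (x : Fin n → ℝ) : Comonotone x x :=
  ⟨Tuple.sort x, Tuple.monotone_sort x, Tuple.monotone_sort x⟩

lemma Comonotone.comp {n : ℕ} {x y : Fin n → ℝ} (h : Comonotone x y) {φ ψ : ℝ → ℝ}
    (hφ : Monotone φ) (hψ : Monotone ψ) : Comonotone (fun i => φ (x i)) (fun i => ψ (y i)) :=
  let ⟨σ, hx, hy⟩ := h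
  ⟨σ, hφ.comp hx, hψ.comp hy⟩

lemma Comonotone.neg {n : ℕ} {x y : Fin n → ℝ} (h : Comonotone x y) :
    Comonotone (fun i => -x i) (fun i => -y i) :=
  let ⟨σ, hx, hy⟩ := h
  ⟨Fin.revPerm.trans σ, fun _ _ hij => neg_le_neg (hx (Fin.rev_le_rev.mpr hij)),
    fun _ _ hij => neg_le_neg (hy (Fin.rev_le_rev.mpr hij))⟩

lemma Comonotone.le_and_le_of_add_le {n : ℕ} {x y : Fin n → ℝ} (h : Comonotone x y)
    {i j : Fin n} (hij : x i + y i ≤ x j + y j) : x i ≤ x j ∧ y i ≤ y j := by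
  obtain ⟨σ, hx, hy⟩ := h
  rcases le_total (σ.symm i) (σ.symm j) with h | h
  · simpa using And.intro (hx h) (hy h)
  · have hxji : x j ≤ x i := by simpa using hx h
    have hyji : y j ≤ y i := by simpa using hy h
    constructor <;> linarith

lemma monotone_sub_min_const (c : ℝ) : Monotone fun t : ℝ => t - min t c :=
  fun _ _ _ => by grind

lemma Set.OrdConnected.sub_min_mem {D : Set ℝ} (hD : D.OrdConnected) (h0 : 0 ∈ D)
    (hD0 : D ⊆ Ici 0) {t c : ℝ} (ht : t ∈ D) (hc : c ∈ D) : t - min t c ∈ D := by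
  have ht0 : 0 ≤ t := hD0 ht
  have hc0 : 0 ≤ c := hD0 hc
  exact hD.out h0 ht ⟨by grind, by grind⟩

lemma min_const_eq_indTuple {n : ℕ} {x : Fin n → ℝ} {S : Finset (Fin n)} {a : ℝ} (ha : 0 ≤ a)
    (hS : ∀ i ∈ S, a ≤ x i) (hSc : ∀ i ∉ S, x i = 0) : (fun i => min (x i) a) = indTuple S a := by
  funext i
  unfold indTuple
  split_ifs with hi
  · exact min_eq_right (hS i hi)
  · rw [hSc i hi, min_eq_left ha]

namespace HorizMinAdditiveOn

variable {n : ℕ} {D : Set ℝ} {f : (Fin n → ℝ) → ℝ}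

lemma map_zero (hf : HorizMinAdditiveOn D f) (h0 : 0 ∈ D) : f 0 = 0 := by
  have h := hf 0 (fun _ => h0) 0 h0 (fun _ => by simpa using h0)
  simp only [Pi.zero_apply, min_self, sub_self] at h
  change f 0 = f 0 + f 0 at h
  linarith

lemma eq_min_add_sub_min (hf : HorizMinAdditiveOn D f) (hD : D.OrdConnected) (h0 : 0 ∈ D)
    (hD0 : D ⊆ Ici 0) {x : Fin n → ℝ} (hx : ∀ i, x i ∈ D) {c : ℝ} (hc : c ∈ D) :
    f x = f (fun i => min (x i) c) + f (fun i => x i - min (x i) c) :=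
  hf x hx c hc fun i => hD.sub_min_mem h0 hD0 (hx i) hc

lemma indTuple_add (hf : HorizMinAdditiveOn D f) (h0 : 0 ∈ D) {r s : ℝ} (hr0 : 0 ≤ r)
    (hs0 : 0 ≤ s) (hr : r ∈ D) (hs : s ∈ D) (hrs : r + s ∈ D) (S : Finset (Fin n)) :
    f (indTuple S (r + s)) = f (indTuple S r) + f (indTuple S s) := by
  have h := hf (indTuple S (r + s)) (fun i => by unfold indTuple; split_ifs <;> assumption) r hr
    (fun i => by unfold indTuple; split_ifs <;> simpa [hr0, hs0])
  convert h using 3 <;> funext i <;> unfold indTuple <;> split_ifs <;> grind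

lemma defect_eq_of_layer (hf : HorizMinAdditiveOn D f) (hD : D.OrdConnected) (h0 : 0 ∈ D)
    (hD0 : D ⊆ Ici 0) {x y : Fin n → ℝ} (hx : ∀ i, x i ∈ D) (hy : ∀ i, y i ∈ D)
    (hxy : ∀ i, x i + y i ∈ D) {S : Finset (Fin n)} {a b : ℝ} (ha : a ∈ D) (hb : b ∈ D)
    (hab : a + b ∈ D) (hS : ∀ i ∈ S, a ≤ x i ∧ b ≤ y i) (hSc : ∀ i ∉ S, x i = 0 ∧ y i = 0) :
    f (fun i => x i + y i) - (f x + f y) =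
      f (fun i => (x i - min (x i) a) + (y i - min (y i) b)) -
        (f (fun i => x i - min (x i) a) + f (fun i => y i - min (y i) b)) := by
  have ha0 : 0 ≤ a := hD0 ha
  have hb0 : 0 ≤ b := hD0 hb
  have hxa := min_const_eq_indTuple ha0 (fun i hi => (hS i hi).1) (fun i hi => (hSc i hi).1)
  have hyb := min_const_eq_indTuple hb0 (fun i hi => (hS i hi).2) (fun i hi => (hSc i hi).2)
  have hzab : (fun i => min (x i + y i) (a + b)) = indTuple S (a + b) :=
    min_const_eq_indTuple (by linarith) (fun i hi => add_le_add (hS i hi).1 (hS i hi).2)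
      (fun i hi => by simp [hSc i hi])
  have hcut : (fun i => x i + y i - min (x i + y i) (a + b)) =
      fun i => (x i - min (x i) a) + (y i - min (y i) b) := by
    funext i
    by_cases hi : i ∈ S <;> grind
  have ex := hf.eq_min_add_sub_min hD h0 hD0 hx ha
  have ey := hf.eq_min_add_sub_min hD h0 hD0 hy hb
  have ez := hf.eq_min_add_sub_min hD h0 hD0 hxy hab
  rw [hxa] at ex
  rw [hyb] at ey
  rw [hzab, hcut] at ez
  have := hf.indTuple_add h0 ha0 hb0 ha hb hab S
  linarith

end HorizMinAdditiveOn

theorem HorizMinAdditiveOn.comonAdditiveOn {n : ℕ} {D : Set ℝ} {f : (Fin n → ℝ) → ℝ}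
    (hf : HorizMinAdditiveOn D f) (hD : D.OrdConnected) (h0 : 0 ∈ D) (hD0 : D ⊆ Ici 0) :
    ComonAdditiveOn D f := by
  suffices key : ∀ S : Finset (Fin n), ∀ x y : Fin n → ℝ, (∀ i, x i ∈ D) → (∀ i, y i ∈ D) →
      Comonotone x y → (∀ i, x i + y i ∈ D) → (∀ i ∉ S, x i + y i = 0) →
      f (fun i => x i + y i) = f x + f y from
    fun x y hx hy hxy hz => key univ x y hx hy hxy hz (by simp)
  intro S
  induction S using Finset.strongInduction with
  | H S ih =>
  intro x y hx hy hxy hz hS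
  have hx0 : ∀ i, 0 ≤ x i := fun i => hD0 (hx i)
  have hy0 : ∀ i, 0 ≤ y i := fun i => hD0 (hy i)
  set T := univ.filter fun i => x i + y i ≠ 0 with hT
  have hTc : ∀ i ∉ T, x i = 0 ∧ y i = 0 := fun i hi => by
    simp only [hT, mem_filter] at hi
    grind [hx0 i, hy0 i]
  rcases T.eq_empty_or_nonempty with hTe | hTne
  · obtain ⟨rfl, rfl⟩ : x = 0 ∧ y = 0 :=
      ⟨funext fun i => (hTc i (by simp [hTe])).1, funext fun i => (hTc i (by simp [hTe])).2⟩
    simp only [Pi.zero_apply, add_zero]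
    change f 0 = f 0 + f 0
    rw [hf.map_zero h0, add_zero]
  obtain ⟨k, hkT, hk⟩ := T.exists_min_image (fun i => x i + y i) hTne
  have hkS : k ∈ S := by
    by_contra hkS
    exact (mem_filter.1 hkT).2 (hS k hkS)
  rw [← sub_eq_zero, hf.defect_eq_of_layer hD h0 hD0 hx hy hz (hx k) (hy k) (hz k)
    (fun i hi => hxy.le_and_le_of_add_le (hk i hi)) hTc, sub_eq_zero]
  refine ih (S.erase k) (erase_ssubset hkS) _ _ (fun i => hD.sub_min_mem h0 hD0 (hx i) (hx k))
    (fun i => hD.sub_min_mem h0 hD0 (hy i) (hy k))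
    (hxy.comp (monotone_sub_min_const _) (monotone_sub_min_const _)) (fun i => ?_) (fun i hi => ?_)
  · refine hD.out h0 (hz i) ⟨?_, ?_⟩ <;> grind [hx0 i, hy0 i, hx0 k, hy0 k]
  · by_cases hik : i = k
    · grind [hx0 k, hy0 k]
    · grind [hS i (by simpa [hik] using hi), hx0 i, hy0 i, hx0 k, hy0 k]

namespace HorizMedAdditiveOn

variable {n : ℕ} {I : Set ℝ} {f : (Fin n → ℝ) → ℝ}

lemma map_zero (hf : HorizMedAdditiveOn I f) (h0 : 0 ∈ I) : f 0 = 0 := by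
  have h := hf 0 (fun _ => h0) 0 h0 le_rfl
  simp only [Pi.zero_apply, neg_zero, min_self, max_self, sub_self] at h
  change f 0 = f 0 + f 0 + f 0 at h
  linarith

lemma horizMinAdditiveOn (hf : HorizMedAdditiveOn I f) (h0 : 0 ∈ I) :
    HorizMinAdditiveOn (I ∩ Ici 0) f := by
  intro x hx c hc _
  have hx0 : ∀ i, 0 ≤ x i := fun i => (hx i).2
  have hc0 : 0 ≤ c := hc.2
  have h := hf x (fun i => (hx i).1) c hc.1 hc0
  rwa [show (fun i => max (-c) (min (x i) c)) = fun i => min (x i) c from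
      funext fun i => by grind [hx0 i],
    show (fun i => x i - max (x i) (-c)) = 0 from
      funext fun i => by simp only [Pi.zero_apply]; grind [hx0 i],
    hf.map_zero h0, add_zero] at h

lemma comp_neg (hf : HorizMedAdditiveOn I f) (hsymm : ∀ t ∈ I, -t ∈ I) :
    HorizMedAdditiveOn I fun x => f (-x) := by
  intro x hx c hc hc0
  have e₁ : (fun i => max (-c) (min ((-x) i) c)) = -fun i => max (-c) (min (x i) c) :=
    funext fun i => by simp only [Pi.neg_apply]; grind
  have e₂ : (fun i => (-x) i - min ((-x) i) c) = -fun i => x i - max (x i) (-c) :=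
    funext fun i => by simp only [Pi.neg_apply]; grind
  have e₃ : (fun i => (-x) i - max ((-x) i) (-c)) = -fun i => x i - min (x i) c :=
    funext fun i => by simp only [Pi.neg_apply]; grind
  have h := hf (-x) (fun i => hsymm _ (hx i)) c hc hc0
  rw [e₁, e₂, e₃] at h
  simp only
  linarith

lemma eq_pos_add_neg (hf : HorizMedAdditiveOn I f) (h0 : 0 ∈ I) (x : Fin n → ℝ)
    (hx : ∀ i, x i ∈ I) : f x = f (fun i => max (x i) 0) + f (fun i => -max (-x i) 0) := by
  have h := hf x hx 0 h0 le_rfl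
  rwa [show (fun i => max (-0) (min (x i) 0)) = 0 from
      funext fun i => by simp only [Pi.zero_apply]; grind,
    show (fun i => x i - min (x i) 0) = fun i => max (x i) 0 from funext fun i => by grind,
    show (fun i => x i - max (x i) (-0)) = fun i => -max (-x i) 0 from funext fun i => by grind,
    hf.map_zero h0, zero_add] at h

end HorizMedAdditiveOn

lemma ComonAdditiveOn.of_comp_neg {n : ℕ} {D E : Set ℝ} {f : (Fin n → ℝ) → ℝ}
    (hf : ComonAdditiveOn D fun x => f (-x)) (hED : ∀ t ∈ E, -t ∈ D) : ComonAdditiveOn E f := by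
  intro x y hx hy hxy hz
  have h := hf (-x) (-y) (fun i => hED _ (hx i)) (fun i => hED _ (hy i)) hxy.neg
    (fun i => by simpa only [Pi.neg_apply, neg_add] using hED _ (hz i))
  simp only [neg_neg] at h
  rw [← h]
  congr 1
  funext i
  simp only [Pi.neg_apply, neg_add, neg_neg]

section Converse

variable {n : ℕ} {I : Set ℝ} {f : (Fin n → ℝ) → ℝ}

lemma ComonAdditiveOn.posPart_eq_add_cut (hf : ComonAdditiveOn (I ∩ Ici 0) f)
    (hI : I.OrdConnected) (h0 : 0 ∈ I) {x : Fin n → ℝ} (hx : ∀ i, x i ∈ I) {c : ℝ} (hc : c ∈ I)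
    (hc0 : 0 ≤ c) :
    f (fun i => max (x i) 0) =
      f (fun i => max (max (-c) (min (x i) c)) 0) + f (fun i => x i - min (x i) c) := by
  have hIpos : (I ∩ Ici 0).OrdConnected := hI.inter ordConnected_Ici
  have h0pos : (0 : ℝ) ∈ I ∩ Ici 0 := ⟨h0, self_mem_Ici⟩
  have hxpos : ∀ i, max (x i) 0 ∈ I ∩ Ici 0 := fun i =>
    ⟨by rcases max_choice (x i) 0 with h | h <;> simp only [h, hx i, h0],
      mem_Ici.2 (le_max_right _ _)⟩
  have h := hf _ _
    (fun i => hIpos.out h0pos ⟨hc, hc0⟩ ⟨by grind, by grind⟩)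
    (fun i => hIpos.out h0pos (hxpos i) ⟨by grind, by grind⟩)
    ((Comonotone.refl x).comp (φ := fun t => max (max (-c) (min t c)) 0)
      (fun s t hst => by grind) (monotone_sub_min_const c))
    (fun i => by
      rw [show max (max (-c) (min (x i) c)) 0 + (x i - min (x i) c) = max (x i) 0 by grind]
      exact hxpos i)
  rwa [show (fun i => max (max (-c) (min (x i) c)) 0 + (x i - min (x i) c)) =
    fun i => max (x i) 0 from funext fun i => by grind] at h

lemma ComonAdditiveOn.negPart_eq_add_cut (hf : ComonAdditiveOn (I ∩ Iic 0) f)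
    (hI : I.OrdConnected) (h0 : 0 ∈ I) {x : Fin n → ℝ} (hx : ∀ i, x i ∈ I) {c : ℝ}
    (hc : -c ∈ I) (hc0 : 0 ≤ c) :
    f (fun i => -max (-x i) 0) =
      f (fun i => -max (-max (-c) (min (x i) c)) 0) + f (fun i => x i - max (x i) (-c)) := by
  have hIneg : (I ∩ Iic 0).OrdConnected := hI.inter ordConnected_Iic
  have h0neg : (0 : ℝ) ∈ I ∩ Iic 0 := ⟨h0, self_mem_Iic⟩
  have hxneg : ∀ i, -max (-x i) 0 ∈ I ∩ Iic 0 := fun i =>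
    ⟨by rcases max_choice (-x i) 0 with h | h <;> simp only [h, neg_neg, neg_zero, hx i, h0],
      mem_Iic.2 (by simp)⟩
  have h := hf _ _
    (fun i => hIneg.out ⟨hc, mem_Iic.2 (by linarith)⟩ h0neg ⟨by grind, by grind⟩)
    (fun i => hIneg.out (hxneg i) h0neg ⟨by grind, by grind⟩)
    ((Comonotone.refl x).comp (φ := fun t => -max (-max (-c) (min t c)) 0)
      (ψ := fun t => t - max t (-c)) (fun s t hst => by grind) (fun s t hst => by grind))
    (fun i => by
      rw [show -max (-max (-c) (min (x i) c)) 0 + (x i - max (x i) (-c)) = -max (-x i) 0 by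
        grind]
      exact hxneg i)
  rwa [show (fun i => -max (-max (-c) (min (x i) c)) 0 + (x i - max (x i) (-c))) =
    fun i => -max (-x i) 0 from funext fun i => by grind] at h

theorem HorizMedAdditiveOn.of_comonAdditiveOn (hI : I.OrdConnected) (hsymm : ∀ t ∈ I, -t ∈ I)
    (h0 : 0 ∈ I) (hpos : ComonAdditiveOn (I ∩ Ici 0) f) (hneg : ComonAdditiveOn (I ∩ Iic 0) f)
    (hsplit : ∀ x : Fin n → ℝ, (∀ i, x i ∈ I) →
      f x = f (fun i => max (x i) 0) + f (fun i => -max (-x i) 0)) :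
    HorizMedAdditiveOn I f := by
  intro x hx c hc hc0
  have hm : ∀ i, max (-c) (min (x i) c) ∈ I := fun i =>
    hI.out (hsymm c hc) hc ⟨le_max_left _ _, max_le (by linarith) (min_le_right _ _)⟩
  rw [hsplit x hx, hsplit _ hm, hpos.posPart_eq_add_cut hI h0 hx hc hc0,
    hneg.negPart_eq_add_cut hI h0 hx (hsymm c hc) hc0]
  ring

end Converse

theorem statement3_general (n : ℕ) (I : Set ℝ) (hI : I.OrdConnected)
    (hsymm : ∀ x : ℝ, x ∈ I → -x ∈ I) (h0I : (0 : ℝ) ∈ I)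
    (f : (Fin n → ℝ) → ℝ) :
    HorizMedAdditiveOn I f ↔
      (ComonAdditiveOn (I ∩ Set.Ici 0) f ∧ ComonAdditiveOn (I ∩ Set.Iic 0) f ∧
        ∀ x : Fin n → ℝ, (∀ i, x i ∈ I) →
          f x = f (fun i => max (x i) 0) + f (fun i => -max (-x i) 0)) := by
  have hIpos : (I ∩ Ici 0).OrdConnected := hI.inter ordConnected_Ici
  have h0Ipos : (0 : ℝ) ∈ I ∩ Ici 0 := ⟨h0I, self_mem_Ici⟩
  refine ⟨fun hf => ⟨?_, ?_, hf.eq_pos_add_neg h0I⟩, fun ⟨hpos, hneg, hsplit⟩ =>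
    .of_comonAdditiveOn hI hsymm h0I hpos hneg hsplit⟩
  · exact (hf.horizMinAdditiveOn h0I).comonAdditiveOn hIpos h0Ipos inter_subset_right
  · exact ((hf.comp_neg hsymm).horizMinAdditiveOn h0I).comonAdditiveOn hIpos h0Ipos
      inter_subset_right |>.of_comp_neg fun t ht => ⟨hsymm t ht.1, neg_nonneg.2 (mem_Iic.1 ht.2)⟩

theorem statement3 (n : ℕ) (hn : 0 < n) (I : Set ℝ) (hI : I.OrdConnected)
    (hsymm : ∀ x : ℝ, x ∈ I → -x ∈ I) (h0I : (0 : ℝ) ∈ I)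
    (f : (Fin n → ℝ) → ℝ) :
    HorizMedAdditiveOn I f ↔
      (ComonAdditiveOn (I ∩ Set.Ici 0) f ∧ ComonAdditiveOn (I ∩ Set.Iic 0) f ∧
        ∀ x : Fin n → ℝ, (∀ i, x i ∈ I) →
          f x = f (fun i => max (x i) 0) + f (fun i => -max (-x i) 0)) :=
  statement3_general n I hI hsymm h0I f
end

section
/- A function f : Iⁿ → ℝ is comonotonically modular if and only if it is comonotonically separable, i.e., for every permutation σ of X there exist functions f^σ_i : I → ℝ (i = 1,…,n) such that f(x) = Σ_{i=1}^n f^σ_i(x_{σ(i)}) for every x ∈ Iⁿ_σ. -/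
/-!
Separability implies modularity termwise, since `h a + h b = h (min a b) + h (max a b)` for
every `h`. Conversely, after relabelling the coordinates by `σ` it suffices to treat a
nondecreasing `x₀ ≤ ⋯ ≤ xₙ`. Let `yₖ = (x₀, …, xₖ, xₖ, …, xₖ)` and let `Sₖ(u, v)` be the value
of `f` at the tuple equal to `u` on the coordinates `≤ k` and to `v` after them. Modularity of
`yₖ₊₁` and the constant tuple `xₖ` gives `f yₖ₊₁ - f yₖ = Sₖ(xₖ, xₖ₊₁) - Sₖ(xₖ, xₖ)`. As `Sₖ` is
modular on `{u ≤ v}`, comparing with a fixed `c ∈ I` yields `Sₖ(u, v) - Sₖ(u, u) = Hₖ v - Hₖ u`,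
so telescoping from `y₀ = (x₀, …, x₀)` to `yₙ = x` writes `f x` as
`f (x₀, …, x₀) + ∑ₖ (Hₖ xₖ₊₁ - Hₖ xₖ)`, a sum of functions of single coordinates.
-/

open Finset

theorem apply_add_apply_eq_apply_min_add_apply_max {α β : Type*} [LinearOrder α]
    [AddCommMagma β] (h : α → β) (a b : α) : h a + h b = h (min a b) + h (max a b) := by
  rcases le_total a b with hab | hba
  · rw [min_eq_left hab, max_eq_right hab]
  · rw [min_eq_right hba, max_eq_left hba, add_comm]

theorem Fin.sum_univ_succ_sub_castSucc {M : Type*} [AddCommGroup M] {n : ℕ}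
    (f : Fin (n + 1) → M) : ∑ i : Fin n, (f i.succ - f i.castSucc) = f (Fin.last n) - f 0 := by
  induction n with
  | zero => simp
  | succ n ih =>
    rw [Fin.sum_univ_castSucc]
    simp only [Fin.succ_castSucc]
    rw [ih (fun i => f i.castSucc)]
    simp

theorem exists_sub_eq_sub_of_modularOn_le {α : Type*} [LinearOrder α] {I : Set α} {c : α}
    (hc : c ∈ I) {S : α → α → ℝ}
    (hS : ∀ ⦃u₁ v₁ u₂ v₂⦄, u₁ ∈ I → v₁ ∈ I → u₂ ∈ I → v₂ ∈ I → u₁ ≤ v₁ → u₂ ≤ v₂ →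
      S u₁ v₁ + S u₂ v₂ = S (min u₁ u₂) (min v₁ v₂) + S (max u₁ u₂) (max v₁ v₂)) :
    ∃ H : α → ℝ, ∀ ⦃u v⦄, u ∈ I → v ∈ I → u ≤ v → S u v - S u u = H v - H u := by
  refine ⟨fun v => S (min v c) v - S (min v c) c, fun u v hu hv huv => ?_⟩
  obtain hvc | hcv := le_total v c
  · have huc := huv.trans hvc
    have h := hS hu hc hv hv huc le_rfl
    simp only [min_eq_left huv, min_eq_right hvc, max_eq_right huv, max_eq_left hvc] at h
    simp only [min_eq_left huc, min_eq_left hvc]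
    linarith
  obtain huc | hcu := le_total u c
  · have h := hS hu hv hc hc huv le_rfl
    simp only [min_eq_left huc, min_eq_right hcv, max_eq_right huc, max_eq_left hcv] at h
    simp only [min_eq_left huc, min_eq_right hcv]
    linarith
  · have h := hS hc hv hu hu (hcu.trans huv) le_rfl
    simp only [min_eq_left hcu, min_eq_right huv, max_eq_right hcu, max_eq_left huv] at h
    simp only [min_eq_right hcu, min_eq_right hcv]
    linarith

section Separable

variable {ι α β : Type*} [Fintype ι] [AddCommGroup β]

def separableOn (s : Set (ι → α)) : AddSubgroup ((ι → α) → β) where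
  carrier := {f | ∃ g : ι → α → β, ∀ x ∈ s, f x = ∑ i, g i (x i)}
  add_mem' := by
    rintro f₁ f₂ ⟨g₁, h₁⟩ ⟨g₂, h₂⟩
    exact ⟨g₁ + g₂, fun x hx => by simp [h₁ x hx, h₂ x hx, sum_add_distrib]⟩
  zero_mem' := ⟨0, by simp⟩
  neg_mem' := by
    rintro f ⟨g, h⟩
    exact ⟨-g, fun x hx => by simp [h x hx]⟩

theorem apply_mem_separableOn [DecidableEq ι] (s : Set (ι → α)) (i : ι) (h : α → β) :
    (fun x => h (x i)) ∈ separableOn s :=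
  ⟨fun j => if j = i then h else 0, fun x _ => by simp [ite_apply]⟩

theorem mem_separableOn_of_eqOn {s : Set (ι → α)} {f f' : (ι → α) → β}
    (hf : f ∈ separableOn s) (h : Set.EqOn f f' s) : f' ∈ separableOn s := by
  obtain ⟨g, hg⟩ := hf
  exact ⟨g, fun x hx => (h hx).symm.trans (hg x hx)⟩

end Separable

theorem Monotone.comonotone {n : ℕ} {x y : Fin n → ℝ} (hx : Monotone x) (hy : Monotone y) :
    Comonotone x y :=
  ⟨1, hx, hy⟩

theorem Comonotone.comp_perm {n : ℕ} {x y : Fin n → ℝ} (h : Comonotone x y)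
    (σ : Equiv.Perm (Fin n)) : Comonotone (x ∘ σ) (y ∘ σ) := by
  obtain ⟨τ, hx, hy⟩ := h
  exact ⟨σ⁻¹ * τ, by simpa [Function.comp_def] using hx, by simpa [Function.comp_def] using hy⟩

theorem ComonModularOn.comp_perm {n : ℕ} {I : Set ℝ} {f : (Fin n → ℝ) → ℝ}
    (hf : ComonModularOn I f) (σ : Equiv.Perm (Fin n)) : ComonModularOn I fun y => f (y ∘ σ) :=
  fun x y hx hy hxy => hf (x ∘ σ) (y ∘ σ) (fun _ => hx _) (fun _ => hy _) (hxy.comp_perm σ)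

theorem comonModularOn_of_forall_perm {n : ℕ} {I : Set ℝ} {f : (Fin n → ℝ) → ℝ}
    (h : ∀ σ : Equiv.Perm (Fin n), ∃ g : Fin n → ℝ → ℝ,
      ∀ x : Fin n → ℝ, (∀ i, x i ∈ I) → Monotone (x ∘ σ) → f x = ∑ i, g i (x (σ i))) :
    ComonModularOn I f := by
  rintro x y hx hy ⟨σ, hxσ, hyσ⟩
  obtain ⟨g, hg⟩ := h σ
  rw [hg x hx hxσ, hg y hy hyσ, hg _ (fun i => min_rec' _ (hx i) (hy i)) (hxσ.min hyσ),
    hg _ (fun i => max_rec' _ (hx i) (hy i)) (hxσ.max hyσ), ← sum_add_distrib,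
    ← sum_add_distrib]
  exact sum_congr rfl fun i _ => apply_add_apply_eq_apply_min_add_apply_max (g i) _ _

section Chain

variable {n : ℕ} {I : Set ℝ} {f : (Fin (n + 1) → ℝ) → ℝ}

def stepTuple (k : Fin n) (u v : ℝ) : Fin (n + 1) → ℝ :=
  fun j => if j ≤ k.castSucc then u else v

@[simp]
theorem stepTuple_self (k : Fin n) (u : ℝ) : stepTuple k u u = fun _ => u := by
  funext j
  exact ite_self u

theorem stepTuple_monotone (k : Fin n) {u v : ℝ} (huv : u ≤ v) :
    Monotone (stepTuple k u v) := by
  intro a b hab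
  simp only [stepTuple]
  split_ifs with ha hb hb
  exacts [le_rfl, huv, absurd (hab.trans hb) ha, le_rfl]

theorem stepTuple_mem (k : Fin n) {u v : ℝ} (hu : u ∈ I) (hv : v ∈ I) (j : Fin (n + 1)) :
    stepTuple k u v j ∈ I := by
  unfold stepTuple
  split_ifs <;> assumption

theorem ComonModularOn.stepTuple_add_stepTuple (hf : ComonModularOn I f) (k : Fin n) :
    ∀ ⦃u₁ v₁ u₂ v₂⦄, u₁ ∈ I → v₁ ∈ I → u₂ ∈ I → v₂ ∈ I → u₁ ≤ v₁ → u₂ ≤ v₂ →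
      f (stepTuple k u₁ v₁) + f (stepTuple k u₂ v₂) =
        f (stepTuple k (min u₁ u₂) (min v₁ v₂)) + f (stepTuple k (max u₁ u₂) (max v₁ v₂)) := by
  intro u₁ v₁ u₂ v₂ hu₁ hv₁ hu₂ hv₂ h₁ h₂
  convert hf _ _ (stepTuple_mem k hu₁ hv₁) (stepTuple_mem k hu₂ hv₂)
    ((stepTuple_monotone k h₁).comonotone (stepTuple_monotone k h₂)) using 3 <;>
  · funext j
    simp only [stepTuple]
    split_ifs <;> rfl

theorem ComonModularOn.apply_comp_min_succ_add_const (hf : ComonModularOn I f) {x : Fin (n + 1) → ℝ}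
    (hxI : ∀ i, x i ∈ I) (hx : Monotone x) (k : Fin n) :
    f (fun j => x (min j k.succ)) + f (fun _ => x k.castSucc) =
      f (fun j => x (min j k.castSucc)) + f (stepTuple k (x k.castSucc) (x k.succ)) := by
  convert hf (fun j => x (min j k.succ)) (fun _ => x k.castSucc) (fun j => hxI _)
    (fun _ => hxI _) ((hx.comp (monotone_id.min monotone_const)).comonotone monotone_const)
    using 3 <;> funext j
  · rw [← hx.map_min, min_assoc, min_eq_right (Fin.castSucc_le_succ k)]
  · rw [← hx.map_max, stepTuple]
    split_ifs with hj
    · rw [min_eq_left (hj.trans (Fin.castSucc_le_succ k)), max_eq_right hj]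
    · have hkj : k.succ ≤ j := Fin.castSucc_lt_iff_succ_le.mp (not_le.mp hj)
      rw [min_eq_right hkj, max_eq_left (Fin.castSucc_le_succ k)]

theorem ComonModularOn.mem_separableOn (hf : ComonModularOn I f) {c : ℝ} (hc : c ∈ I) :
    f ∈ separableOn {x | (∀ i, x i ∈ I) ∧ Monotone x} := by
  choose H hH using fun k : Fin n =>
    exists_sub_eq_sub_of_modularOn_le hc (hf.stepTuple_add_stepTuple k)
  refine mem_separableOn_of_eqOn (f := (fun x => f fun _ => x 0) +
    ∑ k : Fin n, ((fun x => H k (x k.succ)) - fun x => H k (x k.castSucc))) ?_ ?_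
  · exact add_mem (apply_mem_separableOn _ 0 fun t => f fun _ => t) <| sum_mem fun k _ =>
      sub_mem (apply_mem_separableOn _ _ _) (apply_mem_separableOn _ _ _)
  rintro x ⟨hxI, hx⟩
  have hstep (k : Fin n) : f (fun j => x (min j k.succ)) - f (fun j => x (min j k.castSucc)) =
      H k (x k.succ) - H k (x k.castSucc) := by
    have h := hH k (hxI _) (hxI _) (hx (Fin.castSucc_le_succ k))
    rw [stepTuple_self] at h
    linarith [hf.apply_comp_min_succ_add_const hxI hx k]
  have htel := Fin.sum_univ_succ_sub_castSucc fun k => f fun j => x (min j k)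
  simp only [hstep, min_eq_left (Fin.le_last _), min_eq_right (Fin.zero_le _)] at htel
  simp only [Pi.add_apply, Finset.sum_apply, Pi.sub_apply, htel]
  ring

end Chain

theorem statement6_general (n : ℕ) (hn : 0 < n) (I : Set ℝ)
    (hInt : ∃ a b : ℝ, a ∈ I ∧ b ∈ I ∧ a < b) (f : (Fin n → ℝ) → ℝ) :
    ComonModularOn I f ↔
      ∀ σ : Equiv.Perm (Fin n), ∃ g : Fin n → ℝ → ℝ,
        ∀ x : Fin n → ℝ, (∀ i, x i ∈ I) → Monotone (x ∘ σ) →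
          f x = ∑ i : Fin n, g i (x (σ i)) := by
  obtain ⟨c, -, hc, -⟩ := hInt
  obtain ⟨m, rfl⟩ := Nat.exists_eq_add_one_of_ne_zero hn.ne'
  refine ⟨fun hf σ => ?_, comonModularOn_of_forall_perm⟩
  obtain ⟨g, hg⟩ := (hf.comp_perm σ.symm).mem_separableOn hc
  refine ⟨g, fun x hxI hxσ => ?_⟩
  simpa [Function.comp_assoc] using hg (x ∘ σ) ⟨fun _ => hxI _, hxσ⟩

theorem statement6 (n : ℕ) (hn : 0 < n) (I : Set ℝ) (hI : I.OrdConnected)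
    (hInt : ∃ a b : ℝ, a ∈ I ∧ b ∈ I ∧ a < b) (f : (Fin n → ℝ) → ℝ) :
    ComonModularOn I f ↔
      ∀ σ : Equiv.Perm (Fin n), ∃ g : Fin n → ℝ → ℝ,
        ∀ x : Fin n → ℝ, (∀ i, x i ∈ I) → Monotone (x ∘ σ) →
          f x = ∑ i : Fin n, g i (x (σ i)) :=
  statement6_general n hn I hInt f
end
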